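/- Let A_t and A_s be formal deformations of a finite-dimensional associative algebra A with multiplications α_t = μ₀ + tF₁ + t²F₂ + ... and β_s = μ₀ + sH₁ + s²H₂ + .... If A_t and A_s are compatible (jointly extendable to an associative two-parameter family μ₀ + tF₁ + sH₁ + higher order terms in t,s), then the Gerstenhaber bracket [F₁,H₁]_G is a Hochschild 3-coboundary, i.e., the class [f,h]_G = 0 in H³(A,A). -/

import Mathlib

/-! The coefficient of `t s` in the associator of `μ₀ + t F₁ + s H₁ + ⋯` is
`[F₁, H₁]_G - δ μ₁₁`, where `μ₁₁` is the coefficient of `t s` in the family; so the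
associativity of the family exhibits the bracket as the coboundary of `μ₁₁`. -/

open Finset

section

variable {A : Type*} [AddCommGroup A]

def gerstenhaberBracket (φ ψ : A → A → A) (x y z : A) : A :=
  φ (ψ x y) z - φ x (ψ y z) + ψ (φ x y) z - ψ x (φ y z)

def hochschildCoboundary (m ν : A → A → A) (x y z : A) : A :=
  m x (ν y z) - ν (m x y) z + ν x (m y z) - m (ν x y) z

/-- The coefficient of `t ^ k * s ^ l` in the associator of `∑ t ^ i s ^ j μ i j`. -/
def associatorCoeff (μ : ℕ → ℕ → A → A → A) (k l : ℕ) (x y z : A) : A :=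
  ∑ p ∈ antidiagonal k, ∑ q ∈ antidiagonal l,
    (μ p.1 q.1 (μ p.2 q.2 x y) z - μ p.1 q.1 x (μ p.2 q.2 y z))

theorem Finset.Nat.sum_antidiagonal_one {M : Type*} [AddCommMonoid M] (f : ℕ × ℕ → M) :
    ∑ p ∈ antidiagonal 1, f p = f (0, 1) + f (1, 0) := by
  simp [Finset.Nat.sum_antidiagonal_succ]

theorem associatorCoeff_one_one (μ : ℕ → ℕ → A → A → A) (x y z : A) :
    associatorCoeff μ 1 1 x y z =
      gerstenhaberBracket (μ 1 0) (μ 0 1) x y z - hochschildCoboundary (μ 0 0) (μ 1 1) x y z := by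
  simp only [associatorCoeff, Finset.Nat.sum_antidiagonal_one, gerstenhaberBracket,
    hochschildCoboundary]
  abel

theorem gerstenhaberBracket_eq_hochschildCoboundary (μ : ℕ → ℕ → A → A → A) (x y z : A)
    (h : associatorCoeff μ 1 1 x y z = 0) :
    gerstenhaberBracket (μ 1 0) (μ 0 1) x y z = hochschildCoboundary (μ 0 0) (μ 1 1) x y z := by
  rwa [← sub_eq_zero, ← associatorCoeff_one_one]

end

theorem stmt_18_general {K A : Type*} [Field K] [AddCommGroup A] [Module K A]
    (m₀ F₁ H₁ : A →ₗ[K] A →ₗ[K] A)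
    (hcompat : ∃ μ : ℕ → ℕ → A →ₗ[K] A →ₗ[K] A,
      μ 0 0 = m₀ ∧ μ 1 0 = F₁ ∧ μ 0 1 = H₁ ∧
      ∀ (k l : ℕ) (x y z : A),
        ∑ p ∈ Finset.HasAntidiagonal.antidiagonal k, ∑ q ∈ Finset.HasAntidiagonal.antidiagonal l,
          (μ p.1 q.1 (μ p.2 q.2 x y) z - μ p.1 q.1 x (μ p.2 q.2 y z)) = 0) :
    ∃ ν : A →ₗ[K] A →ₗ[K] A, ∀ x y z : A,
      F₁ (H₁ x y) z - F₁ x (H₁ y z) + H₁ (F₁ x y) z - H₁ x (F₁ y z) =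
        m₀ x (ν y z) - ν (m₀ x y) z + ν x (m₀ y z) - m₀ (ν x y) z := by
  obtain ⟨μ, rfl, rfl, rfl, hassoc⟩ := hcompat
  exact ⟨μ 1 1, fun x y z =>
    gerstenhaberBracket_eq_hochschildCoboundary (fun i j a b => μ i j a b) x y z
      (hassoc 1 1 x y z)⟩

/-- Gerstenhaber–Giaquinto compatibility criterion: if two formal
deformations of `(A, m₀)` with infinitesimals `F₁`, `H₁` are compatible,
i.e. jointly extendable to an associative two-parameter family
`μ₀ + t F₁ + s H₁ + (higher order in t, s)`, then the Gerstenhaber bracket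
`[F₁,H₁]_G` is a Hochschild 3-coboundary, i.e. `[f,h]_G = 0` in `H³(A,A)`. -/
theorem stmt_18 {K A : Type*} [Field K] [AddCommGroup A] [Module K A]
    (m₀ F₁ H₁ : A →ₗ[K] A →ₗ[K] A)
    (hassoc : ∀ x y z : A, m₀ (m₀ x y) z = m₀ x (m₀ y z))
    (hF : ∀ x y z : A,
      m₀ x (F₁ y z) - F₁ (m₀ x y) z + F₁ x (m₀ y z) - m₀ (F₁ x y) z = 0)
    (hH : ∀ x y z : A,
      m₀ x (H₁ y z) - H₁ (m₀ x y) z + H₁ x (m₀ y z) - m₀ (H₁ x y) z = 0)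
    (hcompat : ∃ μ : ℕ → ℕ → A →ₗ[K] A →ₗ[K] A,
      μ 0 0 = m₀ ∧ μ 1 0 = F₁ ∧ μ 0 1 = H₁ ∧
      ∀ (k l : ℕ) (x y z : A),
        ∑ p ∈ Finset.HasAntidiagonal.antidiagonal k, ∑ q ∈ Finset.HasAntidiagonal.antidiagonal l,
          (μ p.1 q.1 (μ p.2 q.2 x y) z - μ p.1 q.1 x (μ p.2 q.2 y z)) = 0) :
    ∃ ν : A →ₗ[K] A →ₗ[K] A, ∀ x y z : A,
      F₁ (H₁ x y) z - F₁ x (H₁ y z) + H₁ (F₁ x y) z - H₁ x (F₁ y z) =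
        m₀ x (ν y z) - ν (m₀ x y) z + ν x (m₀ y z) - m₀ (ν x y) z :=
  stmt_18_general m₀ F₁ H₁ hcompat
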